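/- arXiv:2110.08158 — 7 statements merged into one kernel-verified Lean document; each statement's English description precedes it below -/
import Mathlib

section
/- Let k be a natural number, let ζ ∈ ℂ^k, and let a, b, c ∈ ℕ^k be exponent vectors. Write ζ^v := ∏_{i=1}^k ζ_i^{v_i} for v ∈ ℕ^k, and set α_i := |ζ_i|² for each i. If α^a − α^b + α^c = 0 (in ℝ) and ζ^a − ζ^b + ζ^c = 0 (in ℂ), then Re(ζ^a · conj(ζ^c)) = 0. -/
/-- **Trinomial obstruction** (Proposition 2.4).
If `α i = |ζ i|²` and both `α` and `ζ` satisfy the trinomial `x^a - x^b + x^c`,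
then `ζ^a · conj(ζ^c)` is pure imaginary. -/
theorem stmt_0 (k : ℕ) (ζ : Fin k → ℂ) (a b c : Fin k → ℕ)
    (hα : (∏ i, Complex.normSq (ζ i) ^ a i) - (∏ i, Complex.normSq (ζ i) ^ b i)
        + (∏ i, Complex.normSq (ζ i) ^ c i) = 0)
    (hζ : (∏ i, ζ i ^ a i) - (∏ i, ζ i ^ b i) + (∏ i, ζ i ^ c i) = 0) :
    ((∏ i, ζ i ^ a i) * (starRingEnd ℂ) (∏ i, ζ i ^ c i)).re = 0 := by
  set A := ∏ i, ζ i ^ a i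
  set B := ∏ i, ζ i ^ b i
  set C := ∏ i, ζ i ^ c i
  have hv : ∀ v : Fin k → ℕ, (∏ i, Complex.normSq (ζ i) ^ v i)
      = Complex.normSq (∏ i, ζ i ^ v i) := by
    intro v
    rw [map_prod]
    exact Finset.prod_congr rfl fun i _ => (map_pow Complex.normSq _ _).symm
  rw [hv a, hv b, hv c] at hα
  have hB : B = A + C := by linear_combination -hζ
  have hα' : Complex.normSq A - Complex.normSq B + Complex.normSq C = 0 := hα
  rw [hB, Complex.normSq_add] at hα'
  linarith
end

section
/- Let k, m, s be natural numbers, let ζ ∈ ℂ^k with ζ_i ≠ 0 for every i, and write ζ^v := ∏_{i=1}^k ζ_i^{v_i} for v ∈ ℤ^k. Let a_1, …, a_m, b_1, …, b_m ∈ ℤ^k and c_1, …, c_s ∈ ℤ^k satisfy: for every i ∈ {1,…,m}, ζ^{a_i} − ζ^{b_i} + 1 = 0 and |ζ^{a_i}|² − |ζ^{b_i}|² + 1 = 0; and for every ℓ ∈ {1,…,s}, ζ^{c_ℓ} = 1. Then for no index j ∈ {1,…,m} does b_j belong to the subgroup of ℤ^k generated by {a_1, …, a_m, c_1, …, c_s}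 (i.e., if b_j lies in this lattice for some j, a contradiction follows). -/
/-- **Lattice obstruction, first case** (Proposition 2.6, lattice `L`).
If `ζ` (with nonzero coordinates) satisfies the Laurent trinomials `x^{aᵢ} - x^{bᵢ} + 1`
together with their squared-modulus versions, and the binomials `x^{cₗ} = 1`,
then no `b j` lies in the subgroup of `ℤ^k` generated by the `aᵢ` and the `cₗ`. -/
theorem stmt_2 (k m s : ℕ) (ζ : Fin k → ℂ) (hζ0 : ∀ i, ζ i ≠ 0)
    (a b : Fin m → Fin k → ℤ) (c : Fin s → Fin k → ℤ)
    (htri : ∀ i : Fin m, (∏ r, ζ r ^ a i r) - (∏ r, ζ r ^ b i r) + 1 = 0)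
    (habs : ∀ i : Fin m,
      Complex.normSq (∏ r, ζ r ^ a i r) - Complex.normSq (∏ r, ζ r ^ b i r) + 1 = 0)
    (hbin : ∀ ℓ : Fin s, (∏ r, ζ r ^ c ℓ r) = 1) :
    ∀ j : Fin m, b j ∉ AddSubgroup.closure (Set.range a ∪ Set.range c) := by
  intro j hj
  -- B_i = A_i + 1
  have hB : ∀ i : Fin m, (∏ r, ζ r ^ b i r) = (∏ r, ζ r ^ a i r) + 1 := by
    intro i; linear_combination - htri i
  -- Re(A_i) = 0
  have hre : ∀ i : Fin m, (∏ r, ζ r ^ a i r).re = 0 := by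
    intro i
    have h2 := habs i
    rw [hB i] at h2
    simp only [Complex.normSq_apply, Complex.add_re, Complex.add_im, Complex.one_re,
      Complex.one_im] at h2
    nlinarith [h2]
  -- the subgroup of v with (ζ^v)² real
  have key : AddSubgroup.closure (Set.range a ∪ Set.range c) ≤
      { carrier := {v : Fin k → ℤ | ((∏ r, ζ r ^ v r) ^ 2).im = 0}
        zero_mem' := by simp
        add_mem' := by
          intro v w hv hw
          simp only [Set.mem_setOf_eq] at hv hw ⊢
          have hprod : (∏ r, ζ r ^ (v + w) r) = (∏ r, ζ r ^ v r) * (∏ r, ζ r ^ w r) := by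
            rw [← Finset.prod_mul_distrib]
            exact Finset.prod_congr rfl fun r _ => zpow_add₀ (hζ0 r) _ _
          rw [hprod, mul_pow, Complex.mul_im, hv, hw]
          ring
        neg_mem' := by
          intro v hv
          simp only [Set.mem_setOf_eq] at hv ⊢
          have hprod : (∏ r, ζ r ^ (-v) r) = (∏ r, ζ r ^ v r)⁻¹ := by
            rw [← Finset.prod_inv_distrib]
            exact Finset.prod_congr rfl fun r _ => by
              simp [zpow_neg]
          rw [hprod, inv_pow, Complex.inv_im, hv]
          simp } := by
    rw [AddSubgroup.closure_le]
    rintro v (⟨i, rfl⟩ | ⟨ℓ, rfl⟩)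
    · show ((∏ r, ζ r ^ a i r) ^ 2).im = 0
      rw [pow_two, Complex.mul_im, hre i]
      ring
    · show ((∏ r, ζ r ^ c ℓ r) ^ 2).im = 0
      rw [hbin ℓ]
      simp
  have hbj : ((∏ r, ζ r ^ b j r) ^ 2).im = 0 := key hj
  -- A_j ≠ 0
  have hA0 : (∏ r, ζ r ^ a j r) ≠ 0 :=
    Finset.prod_ne_zero_iff.2 fun r _ => zpow_ne_zero _ (hζ0 r)
  have him : (∏ r, ζ r ^ a j r).im ≠ 0 := by
    intro h
    exact hA0 (Complex.ext (hre j) h)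
  rw [hB j, pow_two, Complex.mul_im, Complex.add_re, Complex.add_im, hre j] at hbj
  simp at hbj
  exact him hbj
end

section
/- Let k, m, s be natural numbers, let ζ ∈ ℂ^k with ζ_i ≠ 0 for every i, and write ζ^v := ∏_{i=1}^k ζ_i^{v_i} for v ∈ ℤ^k. Let a_1, …, a_m, b_1, …, b_m ∈ ℤ^k and c_1, …, c_s ∈ ℤ^k satisfy: for every i ∈ {1,…,m}, ζ^{a_i} − ζ^{b_i} + 1 = 0 and |ζ^{a_i}|² − |ζ^{b_i}|² + 1 = 0; and for every ℓ ∈ {1,…,s}, ζ^{c_ℓ} = 1. Then for no index j ∈ {1,…,m} does 2·b_j belong to the subgroup of ℤ^k generated by the vectors {a_i + a_t : 1 ≤ i, t ≤ m} together with {c_1, …, c_s} (i.e., if 2·b_j lies in this lattice for some j, a contradiction follows). -/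
/-!
Write `α = ζ^{a_j}`. The trinomial gives `ζ^{b_j} = α + 1`, and comparing it with its
squared-modulus version gives `Re α = 0` for every `a_i`. Products of two purely imaginary
numbers are real, so `v ↦ ζ^v` takes real values on the whole lattice `L'`. But
`ζ^{2 b_j} = (α + 1)^2` has imaginary part `2 Im α ≠ 0`, since `α ≠ 0`.
-/

section LaurentMonomial

variable {ι K : Type*} [Fintype ι] [CommGroupWithZero K]

def laurentMonomial (ζ : ι → K) (v : ι → ℤ) : K := ∏ r, ζ r ^ v r

variable {ζ : ι → K}

@[simp]
theorem laurentMonomial_zero (ζ : ι → K) : laurentMonomial ζ 0 = 1 := by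
  simp [laurentMonomial]

theorem laurentMonomial_ne_zero (hζ : ∀ r, ζ r ≠ 0) (v : ι → ℤ) :
    laurentMonomial ζ v ≠ 0 :=
  Finset.prod_ne_zero_iff.2 fun r _ => zpow_ne_zero _ (hζ r)

theorem laurentMonomial_add (hζ : ∀ r, ζ r ≠ 0) (v w : ι → ℤ) :
    laurentMonomial ζ (v + w) = laurentMonomial ζ v * laurentMonomial ζ w := by
  simp only [laurentMonomial, Pi.add_apply, ← Finset.prod_mul_distrib]
  exact Finset.prod_congr rfl fun r _ => zpow_add₀ (hζ r) _ _

theorem laurentMonomial_neg (v : ι → ℤ) :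
    laurentMonomial ζ (-v) = (laurentMonomial ζ v)⁻¹ := by
  simp [laurentMonomial]

theorem laurentMonomial_zsmul (v : ι → ℤ) (n : ℤ) :
    laurentMonomial ζ (n • v) = laurentMonomial ζ v ^ n := by
  simp only [laurentMonomial, Pi.smul_apply, smul_eq_mul, ← Finset.prod_zpow]
  exact Finset.prod_congr rfl fun r _ => by rw [mul_comm, zpow_mul]

end LaurentMonomial

section RealLocus

variable {ι : Type*} [Fintype ι] {ζ : ι → ℂ}

def realLocus (hζ : ∀ r, ζ r ≠ 0) : AddSubgroup (ι → ℤ) where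
  carrier := {v | (laurentMonomial ζ v).im = 0}
  zero_mem' := by simp
  add_mem' {v w} hv hw := by
    simp_all [laurentMonomial_add hζ, Complex.mul_im]
  neg_mem' {v} hv := by
    simp_all [laurentMonomial_neg, Complex.inv_im]

theorem mem_realLocus (hζ : ∀ r, ζ r ≠ 0) {v : ι → ℤ} :
    v ∈ realLocus hζ ↔ (laurentMonomial ζ v).im = 0 :=
  Iff.rfl

theorem add_mem_realLocus_of_re_eq_zero (hζ : ∀ r, ζ r ≠ 0) {v w : ι → ℤ}
    (hv : (laurentMonomial ζ v).re = 0) (hw : (laurentMonomial ζ w).re = 0) :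
    v + w ∈ realLocus hζ := by
  simp [mem_realLocus, laurentMonomial_add hζ, Complex.mul_im, hv, hw]

end RealLocus

theorem Complex.re_eq_zero_of_sub_add_one_eq_zero {α β : ℂ} (h : α - β + 1 = 0)
    (hnormSq : normSq α - normSq β + 1 = 0) : α.re = 0 := by
  obtain rfl : β = α + 1 := by linear_combination -h
  simp only [normSq_apply, add_re, add_im, one_re, one_im] at hnormSq
  linear_combination -hnormSq / 2

theorem Complex.im_add_one_sq_ne_zero {α : ℂ} (hre : α.re = 0) (hα : α ≠ 0) :
    ((α + 1) ^ 2).im ≠ 0 := by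
  have him : α.im ≠ 0 := fun him => hα (Complex.ext hre him)
  simpa [sq, Complex.mul_im, hre] using him

/-- **Lattice obstruction, second case** (Proposition 2.6, lattice `L'`).
If `ζ` (with nonzero coordinates) satisfies the Laurent trinomials `x^{aᵢ} - x^{bᵢ} + 1`
together with their squared-modulus versions, and the binomials `x^{cₗ} = 1`,
then no `2 • b j` lies in the subgroup of `ℤ^k` generated by the pairwise sums
`aᵢ + aₜ` together with the `cₗ`. -/
theorem stmt_3 (k m s : ℕ) (ζ : Fin k → ℂ) (hζ0 : ∀ i, ζ i ≠ 0)
    (a b : Fin m → Fin k → ℤ) (c : Fin s → Fin k → ℤ)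
    (htri : ∀ i : Fin m, (∏ r, ζ r ^ a i r) - (∏ r, ζ r ^ b i r) + 1 = 0)
    (habs : ∀ i : Fin m,
      Complex.normSq (∏ r, ζ r ^ a i r) - Complex.normSq (∏ r, ζ r ^ b i r) + 1 = 0)
    (hbin : ∀ ℓ : Fin s, (∏ r, ζ r ^ c ℓ r) = 1) :
    ∀ j : Fin m, (2 : ℤ) • b j ∉
      AddSubgroup.closure
        ((Set.range fun p : Fin m × Fin m => a p.1 + a p.2) ∪ Set.range c) := by
  have hre (i : Fin m) : (laurentMonomial ζ (a i)).re = 0 :=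
    Complex.re_eq_zero_of_sub_add_one_eq_zero (htri i) (habs i)
  have hclosure : AddSubgroup.closure
      ((Set.range fun p : Fin m × Fin m => a p.1 + a p.2) ∪ Set.range c) ≤ realLocus hζ0 := by
    rw [AddSubgroup.closure_le]
    rintro _ (⟨⟨i, t⟩, rfl⟩ | ⟨ℓ, rfl⟩)
    · exact add_mem_realLocus_of_re_eq_zero hζ0 (hre i) (hre t)
    · simp [mem_realLocus, laurentMonomial, hbin ℓ]
  intro j hj
  have hb : laurentMonomial ζ (b j) = laurentMonomial ζ (a j) + 1 := by
    unfold laurentMonomial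
    linear_combination -htri j
  apply Complex.im_add_one_sq_ne_zero (hre j) (laurentMonomial_ne_zero hζ0 (a j))
  rw [← hb, ← zpow_natCast, ← laurentMonomial_zsmul]
  exact hclosure hj
end

section
/- Let S be a 5×5 real matrix satisfying: S_{ij} = 0 if j = i or j = i+1 (indices taken mod 5, 1-indexed), S_{ij} > 0 for all other entries, and rank S = 3. Then there is no 5×5 complex matrix M with rank M = 3 such that S_{ij} = |M_{ij}|² for all i, j. -/
/-!
Since `S` and `M` have rank 3, their 4 × 4 minors vanish. Thanks to the zero pattern, three of
these minors collapse to three-term relations `u = v + w` among products of entries of `M`, and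
the same minors of `S` give `|u|² = |v|² + |w|²`. Such a Pythagorean relation puts the ratio
`v / u` on the circle `Re ζ = |ζ|²` through `0` and `1`, and off the real axis when `v, w ≠ 0`.
The third ratio is the product of the first two, which is impossible: if `ζ`, `η` and `ζ η` all
lie on that circle, then `Im ζ · Im η = 0`.
-/

namespace Complex

theorem re_div_eq_normSq_div_of_normSq_add {u v w : ℂ} (h : u = v + w)
    (hn : normSq u = normSq v + normSq w) : (v / u).re = normSq (v / u) := by
  subst h
  rw [div_re, normSq_div]
  simp only [normSq_apply, add_re, add_im] at hn ⊢
  rw [← add_div]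
  congr 1
  linarith

theorem im_div_ne_zero_of_normSq_add {u v w : ℂ} (h : u = v + w)
    (hn : normSq u = normSq v + normSq w) (hv : v ≠ 0) (hw : w ≠ 0) : (v / u).im ≠ 0 := by
  have hu : u ≠ 0 := by
    rintro rfl
    have := normSq_pos.mpr hv
    have := normSq_nonneg w
    rw [map_zero] at hn
    linarith
  intro him
  have hre := re_div_eq_normSq_div_of_normSq_add h hn
  rw [normSq_apply, him] at hre
  have hidem : IsIdempotentElem (v / u) :=
    Complex.ext (by rw [mul_re, him]; linarith) (by rw [mul_im, him]; ring)
  rcases IsIdempotentElem.iff_eq_zero_or_one.mp hidem with h0 | h1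
  · exact hv (by simpa [hu] using h0)
  · rw [div_eq_one_iff_eq hu] at h1
    exact hw (by linear_combination -h - h1)

theorem im_mul_im_eq_zero_of_re_eq_normSq {ζ η : ℂ} (hζ : ζ.re = normSq ζ)
    (hη : η.re = normSq η) (hζη : (ζ * η).re = normSq (ζ * η)) : ζ.im * η.im = 0 := by
  rw [mul_re, normSq_mul, ← hζ, ← hη] at hζη
  linarith

end Complex

theorem Matrix.det_submatrix_eq_zero_of_rank_lt {R m n : Type*} [CommRing R] [IsDomain R]
    [Fintype n] {k : ℕ} (A : Matrix m n R) (r : Fin k → m) (c : Fin k → n) (h : A.rank < k) :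
    (A.submatrix r c).det = 0 := by
  by_contra hdet
  have hle := A.rank_submatrix_le r c
  rw [(A.submatrix r c).rank_of_det_ne_zero hdet, Fintype.card_fin] at hle
  omega

theorem Matrix.det_fin_four {R : Type*} [CommRing R] (A : Matrix (Fin 4) (Fin 4) R) :
    A.det =
      A 0 0 * (A 1 1 * (A 2 2 * A 3 3 - A 2 3 * A 3 2) - A 1 2 * (A 2 1 * A 3 3 - A 2 3 * A 3 1)
        + A 1 3 * (A 2 1 * A 3 2 - A 2 2 * A 3 1))
      - A 0 1 * (A 1 0 * (A 2 2 * A 3 3 - A 2 3 * A 3 2) - A 1 2 * (A 2 0 * A 3 3 - A 2 3 * A 3 0)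
        + A 1 3 * (A 2 0 * A 3 2 - A 2 2 * A 3 0))
      + A 0 2 * (A 1 0 * (A 2 1 * A 3 3 - A 2 3 * A 3 1) - A 1 1 * (A 2 0 * A 3 3 - A 2 3 * A 3 0)
        + A 1 3 * (A 2 0 * A 3 1 - A 2 1 * A 3 0))
      - A 0 3 * (A 1 0 * (A 2 1 * A 3 2 - A 2 2 * A 3 1) - A 1 1 * (A 2 0 * A 3 2 - A 2 2 * A 3 0)
        + A 1 2 * (A 2 0 * A 3 1 - A 2 1 * A 3 0)) := by
  rw [det_succ_row_zero, Fin.sum_univ_four]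
  simp only [det_fin_three, submatrix_apply, Fin.succAbove, Fin.reduceSucc, Fin.reduceCastSucc,
    Fin.reduceLT, ite_true, ite_false, Fin.coe_ofNat_eq_mod]
  ring

theorem pentagon_minor_relations {F : Type*} [Field F] (A : Matrix (Fin 5) (Fin 5) F)
    (hA : ∀ i j : Fin 5, (j = i ∨ j = i + 1) → A i j = 0) (hrank : A.rank ≤ 3) :
    A 0 2 * A 1 3 * A 2 0 * A 3 1 = A 0 3 * A 1 0 * A 2 1 * A 3 2 + A 0 2 * A 1 3 * A 2 1 * A 3 0 ∧
    A 0 3 * A 1 4 * A 2 1 * A 3 2 = A 0 2 * A 1 3 * A 2 4 * A 3 1 + A 0 4 * A 1 3 * A 2 1 * A 3 2 ∧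
    A 0 2 * A 1 4 * A 2 0 * A 4 1 = A 0 2 * A 1 0 * A 2 4 * A 4 1 + A 0 4 * A 1 0 * A 2 1 * A 4 2 := by
  have minor (r c : Fin 4 → Fin 5) := A.det_submatrix_eq_zero_of_rank_lt r c (by omega)
  have d₀ := minor ![0, 1, 2, 3] ![0, 1, 2, 3]
  have d₁ := minor ![0, 1, 2, 3] ![1, 2, 3, 4]
  have d₂ := minor ![0, 1, 2, 4] ![0, 1, 2, 4]
  simp only [Matrix.det_fin_four, Matrix.submatrix_apply, Matrix.cons_val] at d₀ d₁ d₂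
  simp (disch := decide) only [hA] at d₀ d₁ d₂
  exact ⟨by linear_combination d₀, by linear_combination d₁, by linear_combination d₂⟩

open Complex in
/-- **Proposition 3.2**: pentagons are not complex psd-minimal. A scaled slack matrix
of a pentagon (cyclic 5-gon support pattern, positive elsewhere, rank 3) admits no
entrywise complex Hadamard square root of rank 3. -/
theorem stmt_6 (S : Matrix (Fin 5) (Fin 5) ℝ)
    (hzero : ∀ i j : Fin 5, (j = i ∨ j = i + 1) → S i j = 0)
    (hpos : ∀ i j : Fin 5, ¬(j = i ∨ j = i + 1) → 0 < S i j)
    (hrank : S.rank = 3) :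
    ¬ ∃ M : Matrix (Fin 5) (Fin 5) ℂ,
        M.rank = 3 ∧ ∀ i j : Fin 5, S i j = Complex.normSq (M i j) := by
  rintro ⟨M, hMrank, hSM⟩
  have hM_zero : ∀ i j : Fin 5, (j = i ∨ j = i + 1) → M i j = 0 := fun i j hij =>
    normSq_eq_zero.mp (hSM i j ▸ hzero i j hij)
  have hM_ne : ∀ i j : Fin 5, ¬(j = i ∨ j = i + 1) → M i j ≠ 0 := fun i j hij =>
    normSq_pos.mp (hSM i j ▸ hpos i j hij)
  obtain ⟨m₀, m₁, m₂⟩ := pentagon_minor_relations M hM_zero hMrank.le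
  obtain ⟨s₀, s₁, s₂⟩ := pentagon_minor_relations S hzero hrank.le
  simp only [hSM, ← normSq_mul] at s₀ s₁ s₂
  have hratio : M 0 2 * M 1 0 * M 2 4 * M 4 1 / (M 0 2 * M 1 4 * M 2 0 * M 4 1) =
      M 0 3 * M 1 0 * M 2 1 * M 3 2 / (M 0 2 * M 1 3 * M 2 0 * M 3 1) *
        (M 0 2 * M 1 3 * M 2 4 * M 3 1 / (M 0 3 * M 1 4 * M 2 1 * M 3 2)) := by
    rw [div_mul_div_comm, div_eq_div_iff (by simp (disch := decide) [hM_ne])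
      (by simp (disch := decide) [hM_ne])]
    ring
  have hζ₀ := re_div_eq_normSq_div_of_normSq_add m₀ s₀
  have hζ₁ := re_div_eq_normSq_div_of_normSq_add m₁ s₁
  have hζ₂ := re_div_eq_normSq_div_of_normSq_add m₂ s₂
  rw [hratio] at hζ₂
  have him₀ := im_div_ne_zero_of_normSq_add m₀ s₀ (by simp (disch := decide) [hM_ne])
    (by simp (disch := decide) [hM_ne])
  have him₁ := im_div_ne_zero_of_normSq_add m₁ s₁ (by simp (disch := decide) [hM_ne])
    (by simp (disch := decide) [hM_ne])
  exact mul_ne_zero him₀ him₁ (im_mul_im_eq_zero_of_re_eq_normSq hζ₀ hζ₁ hζ₂)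
end

section
/- Let a, b be real numbers with 0 < b < a. Define ξ₁ := √a·i ∈ ℂ and ξ₂ := (a−b)/(a(1+b)) + (√((1+a)·b·(a−b))/(a(1+b)))·i ∈ ℂ. Define the 6×6 real matrix S with rows: (0, 0, 1, 1/a, (a−b)/(a(1+b)), 1); (1, 0, 0, 1, a, a(1+a)(1+b)/(a−b)); ((1+b)/b, 1, 0, 0, 1, a(1+b)²/(b(a−b))); (1, (1+a)b/(a(1+b)), 1, 0, 0, 1); (1, 1, a(1+b)/b, 1, 0, 0); (0, 1, a²(1+b)²/(b(a−b)), (1+a)(1+b)/(a−b), 1, 0). Define the 6×6 complex matrix M with rows: (0, 0, 1, 1/ξ₁, ξ₂, 1); (1, 0, 0, 1, ξ₁, (1+ξ₁)/ξ₂); ((1+ξ₁)/(ξ₁(1−ξ₂)), 1, 0, 0, 1, (1+ξ₁)/(ξ₁ξ₂(1−ξ₂))); (1, 1−ξ₂, 1, 0, 0, 1); (1, 1, (1+ξ₁)/(1−ξ₂), 1, 0, 0); (0, 1, (1+ξ₁)/(ξ₂(1−ξ₂)), (1+ξ₁)/(ξ₁ξ₂), 1, 0). Then S_{ij} = |M_{ij}|²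 for all i, j, rank M = 3, and rank S = 3. -/
/-!
Every entry of `M` is a product or quotient of `1`, `ξ₁`, `ξ₂`, `1 + ξ₁` and `1 - ξ₂`, and
`|·|²` is multiplicative. Since `ξ₁` is purely imaginary and `ξ₂` lies on the circle with
diameter `[0, 1]`, we have `|1 + ξ₁|² = 1 + |ξ₁|²` and `|1 - ξ₂|² = 1 - |ξ₂|²`. So `M` and `S`
are the same rational matrix pattern `pappusMatrix x y`, evaluated at `(ξ₁, ξ₂)` and at
`(|ξ₁|², |ξ₂|²) = (a, (a - b) / (a (1 + b)))` respectively. Over any field, rows 2, 4, 5 of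
`pappusMatrix x y` are combinations of rows 0, 1, 3, whose minor on columns 0, 1, 2 is `1 - y`;
hence the rank is `3` as soon as `x`, `y` and `1 - y` are nonzero.
-/

namespace Matrix

theorem rank_eq_of_mul_submatrix_of_det_ne_zero {K m n : Type*} [Field K] [Fintype m]
    [Fintype n] {r : ℕ} (M : Matrix m n K) (rows : Fin r → m) (cols : Fin r → n)
    (C : Matrix m (Fin r) K) (hC : C * M.submatrix rows id = M)
    (hdet : (M.submatrix rows cols).det ≠ 0) : M.rank = r := by
  apply le_antisymm
  · calc M.rank = (C * M.submatrix rows id).rank := by rw [hC]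
      _ ≤ (M.submatrix rows id).rank := rank_mul_le_right _ _
      _ ≤ r := by simpa using rank_le_card_height (M.submatrix rows id)
  · calc r = (M.submatrix rows cols).rank := by
          rw [rank_of_isUnit _ ((isUnit_iff_isUnit_det _).2 hdet.isUnit), Fintype.card_fin]
      _ ≤ M.rank := rank_submatrix_le _ _ _

end Matrix

section Pappus

variable {K : Type*} [Field K]

def pappusMatrix (x y : K) : Matrix (Fin 6) (Fin 6) K :=
  !![0, 0, 1, 1 / x, y, 1;
     1, 0, 0, 1, x, (1 + x) / y;
     (1 + x) / (x * (1 - y)), 1, 0, 0, 1, (1 + x) / (x * y * (1 - y));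
     1, 1 - y, 1, 0, 0, 1;
     1, 1, (1 + x) / (1 - y), 1, 0, 0;
     0, 1, (1 + x) / (y * (1 - y)), (1 + x) / (x * y), 1, 0]

theorem pappusMatrix_map {L : Type*} [Field L] (φ : K →*₀ L) (x y : K)
    (hx : φ (1 + x) = 1 + φ x) (hy : φ (1 - y) = 1 - φ y) :
    (pappusMatrix x y).map φ = pappusMatrix (φ x) (φ y) := by
  ext i j
  fin_cases i <;> fin_cases j <;> simp [pappusMatrix, map_div₀, hx, hy]

theorem rank_pappusMatrix {x y : K} (hx : x ≠ 0) (hy : y ≠ 0) (hy1 : 1 - y ≠ 0) :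
    (pappusMatrix x y).rank = 3 := by
  refine Matrix.rank_eq_of_mul_submatrix_of_det_ne_zero _ ![0, 1, 3] ![0, 1, 2]
    !![1, 0, 0;
       0, 1, 0;
       -1 / (1 - y), 1 / (x * (1 - y)), 1 / (1 - y);
       0, 0, 1;
       x / (1 - y), -y / (1 - y), 1 / (1 - y);
       (1 + x - y) / (y * (1 - y)), -1 / (1 - y), 1 / (1 - y)] ?_ ?_
  · ext i j
    rw [Matrix.mul_apply, Fin.sum_univ_three]
    fin_cases i <;> fin_cases j <;> simp [pappusMatrix] <;> field_simp <;> ring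
  · rw [Matrix.det_fin_three]
    simpa [pappusMatrix] using hy1

end Pappus

namespace Complex

theorem normSq_one_add_of_re_eq_zero {z : ℂ} (h : z.re = 0) :
    normSq (1 + z) = 1 + normSq z := by
  simp [normSq_add, h]

theorem normSq_one_sub_of_normSq_eq_re {z : ℂ} (h : normSq z = z.re) :
    normSq (1 - z) = 1 - normSq z := by
  rw [normSq_sub]
  simp only [map_one, one_mul, conj_re]
  linarith

end Complex

open Complex in
/-- Sufficiency direction of **Proposition 3.5**: every Pappus hexagon is complex
psd-minimal. For parameters `0 < b < a`, the explicit scaled slack matrix `S` of the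
Pappus hexagon admits the Hadamard factorization `S = M ⊙ conj(M)` with `rank M = 3`
(and `rank S = 3`). -/
theorem stmt_9 (a b : ℝ) (hb : 0 < b) (hba : b < a)
    (ξ1 ξ2 : ℂ)
    (hξ1 : ξ1 = (Real.sqrt a : ℝ) * Complex.I)
    (hξ2 : ξ2 = ((a - b) / (a * (1 + b)) : ℝ)
        + ((Real.sqrt ((1 + a) * b * (a - b)) / (a * (1 + b)) : ℝ)) * Complex.I)
    (S : Matrix (Fin 6) (Fin 6) ℝ)
    (hS : S = !![0, 0, 1, 1 / a, (a - b) / (a * (1 + b)), 1;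
                 1, 0, 0, 1, a, a * (1 + a) * (1 + b) / (a - b);
                 (1 + b) / b, 1, 0, 0, 1, a * (1 + b) ^ 2 / (b * (a - b));
                 1, (1 + a) * b / (a * (1 + b)), 1, 0, 0, 1;
                 1, 1, a * (1 + b) / b, 1, 0, 0;
                 0, 1, a ^ 2 * (1 + b) ^ 2 / (b * (a - b)), (1 + a) * (1 + b) / (a - b), 1, 0])
    (M : Matrix (Fin 6) (Fin 6) ℂ)
    (hM : M = !![0, 0, 1, 1 / ξ1, ξ2, 1;
                 1, 0, 0, 1, ξ1, (1 + ξ1) / ξ2;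
                 (1 + ξ1) / (ξ1 * (1 - ξ2)), 1, 0, 0, 1, (1 + ξ1) / (ξ1 * ξ2 * (1 - ξ2));
                 1, 1 - ξ2, 1, 0, 0, 1;
                 1, 1, (1 + ξ1) / (1 - ξ2), 1, 0, 0;
                 0, 1, (1 + ξ1) / (ξ2 * (1 - ξ2)), (1 + ξ1) / (ξ1 * ξ2), 1, 0]) :
    (∀ i j : Fin 6, S i j = Complex.normSq (M i j)) ∧ M.rank = 3 ∧ S.rank = 3 := by
  have ha : 0 < a := hb.trans hba
  have hab : 0 < a - b := sub_pos.2 hba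
  have hy : 0 < (a - b) / (a * (1 + b)) := by positivity
  have hy1 : 1 - (a - b) / (a * (1 + b)) = (1 + a) * b / (a * (1 + b)) := by
    field_simp; ring
  have hy1_pos : 0 < 1 - (a - b) / (a * (1 + b)) := by rw [hy1]; positivity
  have hS' : S = pappusMatrix a ((a - b) / (a * (1 + b))) := by
    have : 0 < 1 + a := by positivity
    subst hS
    ext i j
    fin_cases i <;> fin_cases j <;> simp [pappusMatrix, hy1] <;> field_simp
  have hM' : M = pappusMatrix ξ1 ξ2 := hM
  have hξ1_re : ξ1.re = 0 := by simp [hξ1]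
  have hξ1_normSq : normSq ξ1 = a := by simp [hξ1, normSq_mul, Real.mul_self_sqrt ha.le]
  have hξ2_normSq : normSq ξ2 = (a - b) / (a * (1 + b)) := by
    rw [hξ2, normSq_add_mul_I, div_pow, div_pow, Real.sq_sqrt (by positivity)]
    field_simp; ring
  have hξ2_re : ξ2.re = (a - b) / (a * (1 + b)) := by
    rw [hξ2, add_re, ofReal_re, re_ofReal_mul, I_re, mul_zero, add_zero]
  have hξ2_one_sub := normSq_one_sub_of_normSq_eq_re (hξ2_normSq.trans hξ2_re.symm)
  have hMS : M.map normSq = S := by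
    rw [hM', pappusMatrix_map normSq ξ1 ξ2 (normSq_one_add_of_re_eq_zero hξ1_re) hξ2_one_sub,
      hξ1_normSq, hξ2_normSq, hS']
  refine ⟨fun i j => by rw [← hMS, Matrix.map_apply], ?_, ?_⟩
  · rw [hM']
    refine rank_pappusMatrix (normSq_pos.1 (hξ1_normSq ▸ ha)) (normSq_pos.1 (hξ2_normSq ▸ hy))
      (normSq_pos.1 ?_)
    rwa [hξ2_one_sub, hξ2_normSq]
  · rw [hS']
    exact rank_pappusMatrix ha.ne' hy.ne' hy1_pos.ne'
end

section
/- Let M be the 6×6 complex matrix with rows (0, 1, 1, 0, 0, 0), (0, 0, 1, 1, 1, 0), (1, 1, 0, 0, 0, 1), (0, 0, 0, 0, 1/2 + i/2, 1), (1, 0, 0, 1, 1/2 − i/2, 0), (1 + i, 1, 0, i, 0, 0), and let S be the 6×6 real matrix given by S_{ij} = |M_{ij}|² for all i, j. Then rank M = 4 (over ℂ) and rank S = 4 (over ℝ). -/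
/-!
Both matrices have rank exactly 4 for the same reason. Rows 4 and 5 are linear combinations
of rows 0–3, so the matrix factors through `Fin 4` and has rank at most 4. Conversely, the
minor on rows 0–3 and columns 0, 1, 2, 4 has the shape `!![0, 1, 1, 0; 0, 0, 1, 1; 1, 1, 0, 0;
0, 0, 0, c]`, whose determinant is `c`, the nonzero (3, 4) entry.
-/

open Matrix

theorem Matrix.rank_eq_of_eq_mul_submatrix {K m n : Type*} [Field K] [Fintype m] [Fintype n]
    {r : ℕ} {X : Matrix m n K} (rows : Fin r → m) (cols : Fin r → n) (A : Matrix m (Fin r) K)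
    (hX : X = A * X.submatrix rows id) (hdet : (X.submatrix rows cols).det ≠ 0) :
    X.rank = r := by
  refine le_antisymm ?_ ?_
  · calc X.rank = (A * X.submatrix rows id).rank := by rw [← hX]
      _ ≤ A.rank := rank_mul_le_left _ _
      _ ≤ r := by simpa using A.rank_le_card_width
  · calc r = (X.submatrix rows cols).rank := by
          rw [rank_of_isUnit _ ((isUnit_iff_isUnit_det _).mpr hdet.isUnit), Fintype.card_fin]
      _ ≤ X.rank := rank_submatrix_le _ _ _

theorem det_pivotMinor {R : Type*} [CommRing R] (c : R) :
    (!![0, 1, 1, 0; 0, 0, 1, 1; 1, 1, 0, 0; 0, 0, 0, c] : Matrix (Fin 4) (Fin 4) R).det = c := by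
  simp [det_succ_row_zero, Fin.sum_univ_succ, Fin.succAbove]

noncomputable def hadamardSqrt : Matrix (Fin 6) (Fin 6) ℂ :=
  !![0, 1, 1, 0, 0, 0;
     0, 0, 1, 1, 1, 0;
     1, 1, 0, 0, 0, 1;
     0, 0, 0, 0, 1/2 + Complex.I/2, 1;
     1, 0, 0, 1, 1/2 - Complex.I/2, 0;
     1 + Complex.I, 1, 0, Complex.I, 0, 0]

noncomputable def slackMatrix : Matrix (Fin 6) (Fin 6) ℝ :=
  !![0, 1, 1, 0, 0, 0;
     0, 0, 1, 1, 1, 0;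
     1, 1, 0, 0, 0, 1;
     0, 0, 0, 0, 1/2, 1;
     1, 0, 0, 1, 1/2, 0;
     2, 1, 0, 1, 0, 0]

theorem normSq_hadamardSqrt (i j : Fin 6) :
    Complex.normSq (hadamardSqrt i j) = slackMatrix i j := by
  fin_cases i <;> fin_cases j <;> norm_num [hadamardSqrt, slackMatrix, Complex.normSq_apply]

theorem rank_hadamardSqrt : hadamardSqrt.rank = 4 := by
  refine rank_eq_of_eq_mul_submatrix ![0, 1, 2, 3] ![0, 1, 2, 4]
    !![1, 0, 0, 0;
       0, 1, 0, 0;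
       0, 0, 1, 0;
       0, 0, 0, 1;
       -1, 1, 1, -1;
       -Complex.I, Complex.I, 1 + Complex.I, -1 - Complex.I] ?_ ?_
  · ext i j
    rw [mul_apply, Fin.sum_univ_four]
    fin_cases i <;> fin_cases j <;> simp [hadamardSqrt, Complex.ext_iff] <;> norm_num
  · have hminor : hadamardSqrt.submatrix ![0, 1, 2, 3] ![0, 1, 2, 4] =
        !![0, 1, 1, 0; 0, 0, 1, 1; 1, 1, 0, 0; 0, 0, 0, 1/2 + Complex.I/2] := by
      ext i j
      fin_cases i <;> fin_cases j <;> rfl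
    rw [hminor, det_pivotMinor]
    simp [Complex.ext_iff]

theorem rank_slackMatrix : slackMatrix.rank = 4 := by
  refine rank_eq_of_eq_mul_submatrix ![0, 1, 2, 3] ![0, 1, 2, 4]
    !![1, 0, 0, 0;
       0, 1, 0, 0;
       0, 0, 1, 0;
       0, 0, 0, 1;
       -1, 1, 1, -1;
       -1, 1, 2, -2] ?_ ?_
  · ext i j
    rw [mul_apply, Fin.sum_univ_four]
    fin_cases i <;> fin_cases j <;> simp [slackMatrix] <;> norm_num
  · have hminor : slackMatrix.submatrix ![0, 1, 2, 3] ![0, 1, 2, 4] =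
        !![0, 1, 1, 0; 0, 0, 1, 1; 1, 1, 0, 0; 0, 0, 0, 1/2] := by
      ext i j
      fin_cases i <;> fin_cases j <;> rfl
    rw [hminor, det_pivotMinor]
    norm_num

/-- Complex psd-minimality witness for the fourth six-vertex doubly 3/4 polytope of
Figure 6: the explicit complex matrix `M` and its entrywise squared-modulus matrix `S`
both have rank 4. -/
theorem stmt_15 (M : Matrix (Fin 6) (Fin 6) ℂ)
    (hM : M = !![0, 1, 1, 0, 0, 0;
                 0, 0, 1, 1, 1, 0;
                 1, 1, 0, 0, 0, 1;
                 0, 0, 0, 0, 1/2 + Complex.I/2, 1;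
                 1, 0, 0, 1, 1/2 - Complex.I/2, 0;
                 1 + Complex.I, 1, 0, Complex.I, 0, 0])
    (S : Matrix (Fin 6) (Fin 6) ℝ)
    (hS : ∀ i j : Fin 6, S i j = Complex.normSq (M i j)) :
    M.rank = 4 ∧ S.rank = 4 := by
  have hM' : M = hadamardSqrt := hM
  have hS' : S = slackMatrix := by
    ext i j
    rw [hS, hM', normSq_hadamardSqrt]
  rw [hM', hS']
  exact ⟨rank_hadamardSqrt, rank_slackMatrix⟩
end

section
/- Let M be the 7×7 complex matrix with rows (0, 0, 0, 1, −i, 1/2 + i/2, 1), (0, 1, 0, 0, 1, i, 2), (0, 2, 1, 0, 0, 1, 2 − 2i), (0, 1, 1/2 − i/2, 1, 0, 0, 1), (0, 1, 1, 2i, 1, 0, 0), (0, 0, 1, 2 + 2i, −2i, 1, 0), (1, 0, 0, 0, 0, 0, 0), and let S be the 7×7 real matrix given by S_{ij} = |M_{ij}|² for all i, j. Then rank M = 4 (over ℂ) and rank S = 4 (over ℝ). -/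
/-! Rows 4–6 of `M` are combinations of rows 1–3 and row 7 is the first unit vector, so `M`
factors through its rows 1, 2, 3, 7 and has rank at most 4. The minor on those rows and the
first four columns is, up to one elementary operation, a permutation matrix, so the rank is
exactly 4. Taking squared moduli of the entries preserves this pattern: the rows of `S` satisfy
the analogous relations with real coefficients. -/

theorem Matrix.rank_eq_card_of_eq_mul_submatrix_of_mul_eq_one {m n k R : Type*}
    [Fintype n] [Fintype k] [DecidableEq k] [CommSemiring R] [StrongRankCondition R]
    (A : Matrix m n R) (X : Matrix m k R) (e : k → m) (f : k → n) (B : Matrix k k R)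
    (hX : A = X * A.submatrix e id) (hB : A.submatrix e f * B = 1) :
    A.rank = Fintype.card k := by
  apply le_antisymm
  · calc A.rank = (X * A.submatrix e id).rank := by rw [← hX]
      _ ≤ X.rank := rank_mul_le_left _ _
      _ ≤ Fintype.card k := rank_le_card_width X
  · calc Fintype.card k = (A.submatrix e f * B).rank := by rw [hB, rank_one]
      _ ≤ (A.submatrix e f).rank := rank_mul_le_left _ _
      _ ≤ A.rank := rank_submatrix_le _ _ _

noncomputable def hexPyramidMatrix : Matrix (Fin 7) (Fin 7) ℂ :=
  !![0, 0, 0, 1, -Complex.I, 1/2 + Complex.I/2, 1;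
     0, 1, 0, 0, 1, Complex.I, 2;
     0, 2, 1, 0, 0, 1, 2 - 2*Complex.I;
     0, 1, 1/2 - Complex.I/2, 1, 0, 0, 1;
     0, 1, 1, 2*Complex.I, 1, 0, 0;
     0, 0, 1, 2 + 2*Complex.I, -2*Complex.I, 1, 0;
     1, 0, 0, 0, 0, 0, 0]

noncomputable def hexPyramidSlack : Matrix (Fin 7) (Fin 7) ℝ :=
  !![0, 0, 0, 1, 1, 1/2, 1;
     0, 1, 0, 0, 1, 1, 4;
     0, 4, 1, 0, 0, 1, 8;
     0, 1, 1/2, 1, 0, 0, 1;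
     0, 1, 1, 4, 1, 0, 0;
     0, 0, 1, 8, 4, 1, 0;
     1, 0, 0, 0, 0, 0, 0]

theorem normSq_hexPyramidMatrix (i j : Fin 7) :
    Complex.normSq (hexPyramidMatrix i j) = hexPyramidSlack i j := by
  fin_cases i <;> fin_cases j <;>
    norm_num [hexPyramidMatrix, hexPyramidSlack, Complex.normSq_apply]

theorem hexPyramidMatrix_eq_mul :
    hexPyramidMatrix = !![1, 0, 0, 0;
                          0, 1, 0, 0;
                          0, 0, 1, 0;
                          1, Complex.I, 1/2 - Complex.I/2, 0;
                          2*Complex.I, -1, 1, 0;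
                          2 + 2*Complex.I, -2, 1, 0;
                          0, 0, 0, 1] * hexPyramidMatrix.submatrix ![0, 1, 2, 6] id := by
  ext i j
  rw [Matrix.mul_apply, Fin.sum_univ_four]
  fin_cases i <;> fin_cases j <;> simp [hexPyramidMatrix, Complex.ext_iff] <;> norm_num

theorem hexPyramidMatrix_submatrix_mul_eq_one :
    hexPyramidMatrix.submatrix ![0, 1, 2, 6] ![0, 1, 2, 3] *
      !![0, 0, 0, 1; 0, 1, 0, 0; 0, -2, 1, 0; 1, 0, 0, 0] = 1 := by
  ext i j
  rw [Matrix.mul_apply, Fin.sum_univ_four]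
  fin_cases i <;> fin_cases j <;> simp [hexPyramidMatrix]

theorem hexPyramidSlack_eq_mul :
    hexPyramidSlack = !![(1 : ℝ), 0, 0, 0;
                         0, 1, 0, 0;
                         0, 0, 1, 0;
                         1, -1, 1/2, 0;
                         4, -3, 1, 0;
                         8, -4, 1, 0;
                         0, 0, 0, 1] * hexPyramidSlack.submatrix ![0, 1, 2, 6] id := by
  ext i j
  rw [Matrix.mul_apply, Fin.sum_univ_four]
  fin_cases i <;> fin_cases j <;> simp [hexPyramidSlack] <;> norm_num

theorem hexPyramidSlack_submatrix_mul_eq_one :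
    hexPyramidSlack.submatrix ![0, 1, 2, 6] ![0, 1, 2, 3] *
      !![0, 0, 0, 1; 0, 1, 0, 0; 0, -4, 1, 0; 1, 0, 0, 0] = 1 := by
  ext i j
  rw [Matrix.mul_apply, Fin.sum_univ_four]
  fin_cases i <;> fin_cases j <;> simp [hexPyramidSlack]

theorem rank_hexPyramidMatrix : hexPyramidMatrix.rank = 4 :=
  Matrix.rank_eq_card_of_eq_mul_submatrix_of_mul_eq_one _ _ _ _ _
    hexPyramidMatrix_eq_mul hexPyramidMatrix_submatrix_mul_eq_one

theorem rank_hexPyramidSlack : hexPyramidSlack.rank = 4 :=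
  Matrix.rank_eq_card_of_eq_mul_submatrix_of_mul_eq_one _ _ _ _ _
    hexPyramidSlack_eq_mul hexPyramidSlack_submatrix_mul_eq_one

/-- Complex psd-minimality witness for the hexagonal pyramid (first seven-vertex
polytope with a degree-six vertex in Figure 5): the explicit complex matrix `M` and
its entrywise squared-modulus matrix `S` both have rank 4. -/
theorem stmt_16 (M : Matrix (Fin 7) (Fin 7) ℂ)
    (hM : M = !![0, 0, 0, 1, -Complex.I, 1/2 + Complex.I/2, 1;
                 0, 1, 0, 0, 1, Complex.I, 2;
                 0, 2, 1, 0, 0, 1, 2 - 2*Complex.I;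
                 0, 1, 1/2 - Complex.I/2, 1, 0, 0, 1;
                 0, 1, 1, 2*Complex.I, 1, 0, 0;
                 0, 0, 1, 2 + 2*Complex.I, -2*Complex.I, 1, 0;
                 1, 0, 0, 0, 0, 0, 0])
    (S : Matrix (Fin 7) (Fin 7) ℝ)
    (hS : ∀ i j : Fin 7, S i j = Complex.normSq (M i j)) :
    M.rank = 4 ∧ S.rank = 4 := by
  have hS' : S = hexPyramidSlack := by
    ext i j
    rw [hS, hM]
    exact normSq_hexPyramidMatrix i j
  subst hM hS'
  exact ⟨rank_hexPyramidMatrix, rank_hexPyramidSlack⟩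
end
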